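/- arXiv:1705.06120 — 8 statements merged into one kernel-verified Lean document; each statement's English description precedes it below -/
import Mathlib

section
/- Let A be m×n, B p×n, W_k an n×k matrix with orthonormal columns, and AW_k = U_k H_k, BW_k = V_k K_k reduced QR decompositions with H_k, K_k invertible. Assume B*B is invertible. Then G = H_k K_k^{-1} is the unique minimizer over k×k matrices G of the (B*B)^{-1}-Frobenius norm of R_3(G) = A*U_k − B*V_k G*, where ‖Y‖_{F,M}² = trace(Y* M Y). -/
open Matrix
open scoped ComplexOrder

noncomputable section

/-- The `M`-Frobenius norm: `‖Y‖_{F,M}² = trace (Yᴴ M Y)`. -/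
def frobM {n k : ℕ} (M : Matrix (Fin n) (Fin n) ℂ) (Y : Matrix (Fin n) (Fin k) ℂ) : ℝ :=
  Real.sqrt (Matrix.trace (Yᴴ * M * Y)).re

/-!
With `M = (Bᴴ B)⁻¹`, `N = Bᴴ V` and `C = Aᴴ U`, the problem is the weighted least-squares
problem `min_X ‖C - N X‖_{F,M}` in `X = Gᴴ`. Since `Bᴴ V = Bᴴ B W K⁻¹`, we get `M N = W K⁻¹`,
hence `Nᴴ M N = K⁻ᴴ Wᴴ Bᴴ V = K⁻ᴴ Kᴴ = 1`: the columns of `N` are `M`-orthonormal. For such `N`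
the residual of `X₀ = Nᴴ M C` is `M`-orthogonal to the range of `N`, so
`‖C - N X‖² = ‖C - N X₀‖² + ‖X₀ - X‖_F²`, and `X₀` is the unique minimizer. Finally
`Nᴴ M C = K⁻ᴴ Wᴴ Aᴴ U = K⁻ᴴ Hᴴ = (H K⁻¹)ᴴ`.
-/

namespace Matrix

section WeightedLeastSquares

variable {R : Type*} [Ring R] [StarRing R] {n l k : Type*} [Fintype n] [Fintype l] [DecidableEq l]

theorem conjTranspose_sub_mul_mul_mul_sub_mul {M : Matrix n n R} (hM : M.IsHermitian)
    {N : Matrix n l R} (hN : Nᴴ * M * N = 1) (C : Matrix n k R) (X : Matrix l k R) :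
    (C - N * X)ᴴ * M * (C - N * X) =
      (C - N * (Nᴴ * M * C))ᴴ * M * (C - N * (Nᴴ * M * C)) +
        (Nᴴ * M * C - X)ᴴ * (Nᴴ * M * C - X) := by
  set X₀ := Nᴴ * M * C
  set R₀ := C - N * X₀
  set D := X₀ - X
  have hres : C - N * X = R₀ + N * D := by simp only [R₀, D, Matrix.mul_sub]; abel
  have horth : Nᴴ * M * R₀ = 0 := by
    rw [Matrix.mul_sub, ← Matrix.mul_assoc (Nᴴ * M), hN, Matrix.one_mul, sub_self]
  have horth' : R₀ᴴ * M * N = 0 := by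
    simpa only [conjTranspose_mul, conjTranspose_conjTranspose, hM.eq, Matrix.mul_assoc,
      conjTranspose_zero] using congrArg conjTranspose horth
  calc (C - N * X)ᴴ * M * (C - N * X)
      = R₀ᴴ * M * R₀ + R₀ᴴ * M * N * D + Dᴴ * (Nᴴ * M * R₀)
          + Dᴴ * (Nᴴ * M * N) * D := by
        simp only [hres, conjTranspose_add, conjTranspose_mul, Matrix.add_mul, Matrix.mul_add,
          Matrix.mul_assoc]
        abel
    _ = R₀ᴴ * M * R₀ + Dᴴ * D := by
        rw [horth, horth', hN, Matrix.zero_mul, Matrix.mul_zero, Matrix.mul_one, add_zero,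
          add_zero]

end WeightedLeastSquares

theorem re_trace_conjTranspose_mul_self_nonneg {m n : Type*} [Fintype m] [Fintype n]
    (D : Matrix m n ℂ) : 0 ≤ (Dᴴ * D).trace.re :=
  (Complex.nonneg_iff.mp (posSemidef_conjTranspose_mul_self D).trace_nonneg).1

theorem re_trace_conjTranspose_mul_self_eq_zero_iff {m n : Type*} [Fintype m] [Fintype n]
    {D : Matrix m n ℂ} : (Dᴴ * D).trace.re = 0 ↔ D = 0 := by
  have him := (Complex.nonneg_iff.mp (posSemidef_conjTranspose_mul_self D).trace_nonneg).2
  rw [← trace_conjTranspose_mul_self_eq_zero_iff, Complex.ext_iff]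
  simp [← him]

end Matrix

section FrobM

variable {n l k : ℕ} {M : Matrix (Fin n) (Fin n) ℂ} {N : Matrix (Fin n) (Fin l) ℂ}

theorem frobM_sub_mul_eq_sqrt (hM : M.IsHermitian) (hN : Nᴴ * M * N = 1)
    (C : Matrix (Fin n) (Fin k) ℂ) (X : Matrix (Fin l) (Fin k) ℂ) :
    frobM M (C - N * X) =
      Real.sqrt ((trace ((C - N * (Nᴴ * M * C))ᴴ * M * (C - N * (Nᴴ * M * C)))).re
        + (trace ((Nᴴ * M * C - X)ᴴ * (Nᴴ * M * C - X))).re) := by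
  rw [frobM, conjTranspose_sub_mul_mul_mul_sub_mul hM hN, trace_add, Complex.add_re]

theorem frobM_sub_mul_le (hM : M.PosSemidef) (hN : Nᴴ * M * N = 1)
    (C : Matrix (Fin n) (Fin k) ℂ) (X : Matrix (Fin l) (Fin k) ℂ) :
    frobM M (C - N * (Nᴴ * M * C)) ≤ frobM M (C - N * X) := by
  rw [frobM_sub_mul_eq_sqrt hM.isHermitian hN C X, frobM]
  exact Real.sqrt_le_sqrt (le_add_of_nonneg_right (re_trace_conjTranspose_mul_self_nonneg _))

theorem eq_of_frobM_sub_mul_eq (hM : M.PosSemidef) (hN : Nᴴ * M * N = 1)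
    {C : Matrix (Fin n) (Fin k) ℂ} {X : Matrix (Fin l) (Fin k) ℂ}
    (h : frobM M (C - N * X) = frobM M (C - N * (Nᴴ * M * C))) : X = Nᴴ * M * C := by
  rw [frobM_sub_mul_eq_sqrt hM.isHermitian hN, frobM] at h
  have hres := (Complex.nonneg_iff.mp ((hM.conjTranspose_mul_mul_same
    (C - N * (Nᴴ * M * C))).trace_nonneg)).1
  have hgap := re_trace_conjTranspose_mul_self_nonneg (Nᴴ * M * C - X)
  rw [Real.sqrt_inj (by positivity) hres, add_eq_left,
    re_trace_conjTranspose_mul_self_eq_zero_iff, sub_eq_zero] at h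
  exact h.symm

end FrobM

section QR

variable {m p n k : ℕ} {A : Matrix (Fin m) (Fin n) ℂ} {B : Matrix (Fin p) (Fin n) ℂ}
  {W : Matrix (Fin n) (Fin k) ℂ} {U : Matrix (Fin m) (Fin k) ℂ} {V : Matrix (Fin p) (Fin k) ℂ}
  {H K : Matrix (Fin k) (Fin k) ℂ}

theorem conjTranspose_mul_conjTranspose_mul_of_mul_eq (hA : A * W = U * H) (hU : Uᴴ * U = 1) :
    Wᴴ * (Aᴴ * U) = Hᴴ := by
  rw [← Matrix.mul_assoc, ← conjTranspose_mul, hA, conjTranspose_mul, Matrix.mul_assoc, hU,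
    Matrix.mul_one]

theorem inv_conjTranspose_mul_self_mul_eq (hB : B * W = V * K) (hK : IsUnit K)
    (hBB : IsUnit (Bᴴ * B)) : (Bᴴ * B)⁻¹ * (Bᴴ * V) = W * K⁻¹ := by
  have hV : V = B * W * K⁻¹ := by
    rw [hB, Matrix.mul_nonsing_inv_cancel_right _ _ ((isUnit_iff_isUnit_det K).mp hK)]
  rw [hV, ← Matrix.mul_assoc Bᴴ, ← Matrix.mul_assoc Bᴴ, Matrix.mul_assoc (Bᴴ * B),
    Matrix.nonsing_inv_mul_cancel_left _ _ ((isUnit_iff_isUnit_det _).mp hBB)]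

end QR

theorem stmt3_general {m p n k : ℕ}
    (A : Matrix (Fin m) (Fin n) ℂ) (B : Matrix (Fin p) (Fin n) ℂ)
    (W : Matrix (Fin n) (Fin k) ℂ)
    (U : Matrix (Fin m) (Fin k) ℂ) (hU : Uᴴ * U = 1)
    (V : Matrix (Fin p) (Fin k) ℂ) (hV : Vᴴ * V = 1)
    (H K : Matrix (Fin k) (Fin k) ℂ)
    (hA : A * W = U * H) (hB : B * W = V * K)
    (hK : IsUnit K)
    (hBB : (Bᴴ * B).PosDef) :
    ∀ G : Matrix (Fin k) (Fin k) ℂ,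
      frobM (Bᴴ * B)⁻¹ (Aᴴ * U - Bᴴ * V * (H * K⁻¹)ᴴ) ≤ frobM (Bᴴ * B)⁻¹ (Aᴴ * U - Bᴴ * V * Gᴴ) ∧
        (frobM (Bᴴ * B)⁻¹ (Aᴴ * U - Bᴴ * V * Gᴴ) = frobM (Bᴴ * B)⁻¹ (Aᴴ * U - Bᴴ * V * (H * K⁻¹)ᴴ)
          → G = H * K⁻¹) := by
  intro G
  have hM := hBB.inv.posSemidef
  have hweight : (Bᴴ * V)ᴴ * (Bᴴ * B)⁻¹ = (K⁻¹)ᴴ * Wᴴ := by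
    rw [← hM.isHermitian.eq, ← conjTranspose_mul,
      inv_conjTranspose_mul_self_mul_eq hB hK hBB.isUnit, conjTranspose_mul]
  have hnormal : (Bᴴ * V)ᴴ * (Bᴴ * B)⁻¹ * (Bᴴ * V) = 1 := by
    rw [hweight, Matrix.mul_assoc, conjTranspose_mul_conjTranspose_mul_of_mul_eq hB hV,
      ← conjTranspose_mul, Matrix.mul_nonsing_inv _ ((isUnit_iff_isUnit_det K).mp hK),
      conjTranspose_one]
  have hopt : (Bᴴ * V)ᴴ * (Bᴴ * B)⁻¹ * (Aᴴ * U) = (H * K⁻¹)ᴴ := by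
    rw [hweight, Matrix.mul_assoc, conjTranspose_mul_conjTranspose_mul_of_mul_eq hA hU,
      ← conjTranspose_mul]
  rw [← hopt]
  exact ⟨frobM_sub_mul_le hM hnormal _ _, fun h => conjTranspose_inj.mp
    ((eq_of_frobM_sub_mul_eq hM hnormal h).trans hopt)⟩

theorem stmt3 {m p n k : ℕ}
    (A : Matrix (Fin m) (Fin n) ℂ) (B : Matrix (Fin p) (Fin n) ℂ)
    (W : Matrix (Fin n) (Fin k) ℂ) (hW : Wᴴ * W = 1)
    (U : Matrix (Fin m) (Fin k) ℂ) (hU : Uᴴ * U = 1)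
    (V : Matrix (Fin p) (Fin k) ℂ) (hV : Vᴴ * V = 1)
    (H K : Matrix (Fin k) (Fin k) ℂ)
    (hA : A * W = U * H) (hB : B * W = V * K)
    (hH : IsUnit H) (hK : IsUnit K)
    (hBB : (Bᴴ * B).PosDef) :
    ∀ G : Matrix (Fin k) (Fin k) ℂ,
      frobM (Bᴴ * B)⁻¹ (Aᴴ * U - Bᴴ * V * (H * K⁻¹)ᴴ) ≤ frobM (Bᴴ * B)⁻¹ (Aᴴ * U - Bᴴ * V * Gᴴ) ∧
        (frobM (Bᴴ * B)⁻¹ (Aᴴ * U - Bᴴ * V * Gᴴ) = frobM (Bᴴ * B)⁻¹ (Aᴴ * U - Bᴴ * V * (H * K⁻¹)ᴴ)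
          → G = H * K⁻¹) :=
  stmt3_general A B W U hU V hV H K hA hB hK hBB
end
end

section
/- Let W be an n×k matrix with orthonormal columns, R an n×j matrix with W*R = 0, x a unit vector in ℂ^n, and r = Rc for some c ∈ ℂ^j. Then ‖[W r]* x‖² = ‖W* x‖² + |r* x|², and over all choices of c the quantity |r*x|²/‖r‖² is maximized by c = R⁺ x (the Moore–Penrose pseudoinverse applied to x), achieving the value ‖R R⁺ x‖². -/
/-!
The first identity only uses the block structure `[W r]* x = (W* x, r* x)`.
For the second, the Penrose conditions `R R⁺ R = R` and `(R R⁺)* = R R⁺` make `P = R R⁺` the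
orthogonal projection onto the range of `R`. Hence `r* x = r* (P x)` for every `r = R c`, and
Cauchy–Schwarz gives `|r* x|² ≤ ‖r‖² ‖P x‖²`, with equality for `r = P x = R (R⁺ x)`.
-/

open Matrix

noncomputable section

/-- Euclidean norm of a complex vector. -/
def en {ι : Type*} [Fintype ι] (v : ι → ℂ) : ℝ := Real.sqrt (∑ i, ‖v i‖ ^ 2)

section EuclideanNorm

variable {ι : Type*} [Fintype ι]

lemma en_eq_norm_toLp (v : ι → ℂ) : en v = ‖WithLp.toLp 2 v‖ :=
  (EuclideanSpace.norm_eq _).symm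

lemma en_sq (v : ι → ℂ) : en v ^ 2 = ∑ i, ‖v i‖ ^ 2 := by
  rw [en, Real.sq_sqrt]; positivity

lemma star_dotProduct_eq_inner (v x : ι → ℂ) :
    star v ⬝ᵥ x = inner ℂ (WithLp.toLp 2 v) (WithLp.toLp 2 x) := by
  rw [EuclideanSpace.inner_toLp_toLp, dotProduct_comm]

lemma norm_star_dotProduct_le (v x : ι → ℂ) : ‖star v ⬝ᵥ x‖ ≤ en v * en x := by
  rw [star_dotProduct_eq_inner, en_eq_norm_toLp, en_eq_norm_toLp]
  exact norm_inner_le_norm _ _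

lemma norm_star_dotProduct_self (v : ι → ℂ) : ‖star v ⬝ᵥ v‖ = en v ^ 2 := by
  rw [star_dotProduct_eq_inner, inner_self_eq_norm_sq_to_K, en_eq_norm_toLp]
  norm_cast
  exact abs_of_nonneg (sq_nonneg _)

lemma en_sq_fromRows_mulVec {m₁ m₂ : Type*} [Fintype m₁] [Fintype m₂]
    (A : Matrix m₁ ι ℂ) (B : Matrix m₂ ι ℂ) (x : ι → ℂ) :
    en (fromRows A B *ᵥ x) ^ 2 = en (A *ᵥ x) ^ 2 + en (B *ᵥ x) ^ 2 := by
  simp only [en_sq, fromRows_mulVec, Fintype.sum_sum_type, Sum.elim_inl, Sum.elim_inr]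

lemma en_sq_conjTranspose_replicateCol_mulVec {o : Type*} [Fintype o] [Unique o] (r x : ι → ℂ) :
    en ((replicateCol o r)ᴴ *ᵥ x) ^ 2 = ‖star r ⬝ᵥ x‖ ^ 2 := by
  simp [en_sq, mulVec, dotProduct, replicateRow_apply]

end EuclideanNorm

section HermitianProjection

variable {m : Type*} [Fintype m] {P : Matrix m m ℂ}

lemma star_dotProduct_eq_star_dotProduct_mulVec_of_mulVec_eq (hP : Pᴴ = P)
    {v : m → ℂ} (hv : P *ᵥ v = v) (x : m → ℂ) :
    star v ⬝ᵥ x = star v ⬝ᵥ (P *ᵥ x) := by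
  conv_lhs => rw [← hv]
  rw [star_mulVec, ← dotProduct_mulVec, hP]

lemma norm_star_dotProduct_sq_div_le (hP : Pᴴ = P)
    {v : m → ℂ} (hv : P *ᵥ v = v) (x : m → ℂ) :
    ‖star v ⬝ᵥ x‖ ^ 2 / en v ^ 2 ≤ en (P *ᵥ x) ^ 2 := by
  rw [star_dotProduct_eq_star_dotProduct_mulVec_of_mulVec_eq hP hv]
  rcases eq_or_lt_of_le (sq_nonneg (en v)) with hv0 | hv0
  · rw [← hv0, div_zero]; positivity
  rw [div_le_iff₀ hv0, ← mul_pow, mul_comm]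
  exact pow_le_pow_left₀ (norm_nonneg _) (norm_star_dotProduct_le _ _) 2

lemma norm_star_dotProduct_sq_div_self (hP : Pᴴ = P) (hPP : P * P = P)
    (x : m → ℂ) (hx : P *ᵥ x ≠ 0) :
    ‖star (P *ᵥ x) ⬝ᵥ x‖ ^ 2 / en (P *ᵥ x) ^ 2 = en (P *ᵥ x) ^ 2 := by
  have hfix : P *ᵥ (P *ᵥ x) = P *ᵥ x := by rw [mulVec_mulVec, hPP]
  have hen : en (P *ᵥ x) ≠ 0 := by rw [en_eq_norm_toLp]; simpa using hx
  rw [star_dotProduct_eq_star_dotProduct_mulVec_of_mulVec_eq hP hfix,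
    norm_star_dotProduct_self]
  field_simp

end HermitianProjection

theorem stmt5_general {n k j : ℕ}
    (W : Matrix (Fin n) (Fin k) ℂ)
    (R : Matrix (Fin n) (Fin j) ℂ)
    -- `Rp` is the Moore–Penrose pseudoinverse of `R`, characterized by the Penrose conditions:
    (Rp : Matrix (Fin j) (Fin n) ℂ)
    (hp1 : R * Rp * R = R)
    (hp3 : (R * Rp)ᴴ = R * Rp)
    (x : Fin n → ℂ)
    (r : Fin n → ℂ) :
    -- ‖[W r]* x‖² = ‖W* x‖² + |r* x|²
    en ((Matrix.fromCols W (Matrix.replicateCol (Fin 1) r))ᴴ.mulVec x) ^ 2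
        = en (Wᴴ.mulVec x) ^ 2 + ‖star r ⬝ᵥ x‖ ^ 2 ∧
    -- the choice c = R⁺ x maximizes |r*x|²/‖r‖², achieving the value ‖R R⁺ x‖²
    (∀ c' : Fin j → ℂ, R.mulVec c' ≠ 0 →
        ‖star (R.mulVec c') ⬝ᵥ x‖ ^ 2 / en (R.mulVec c') ^ 2
          ≤ en (R.mulVec (Rp.mulVec x)) ^ 2) ∧
    (R.mulVec (Rp.mulVec x) ≠ 0 →
        ‖star (R.mulVec (Rp.mulVec x)) ⬝ᵥ x‖ ^ 2 / en (R.mulVec (Rp.mulVec x)) ^ 2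
          = en (R.mulVec (Rp.mulVec x)) ^ 2) := by
  have hPx : R *ᵥ (Rp *ᵥ x) = (R * Rp) *ᵥ x := mulVec_mulVec _ _ _
  have hPP : R * Rp * (R * Rp) = R * Rp := by rw [← Matrix.mul_assoc, hp1]
  refine ⟨?_, fun c' _ => ?_, fun hne => ?_⟩
  · rw [conjTranspose_fromCols_eq_fromRows_conjTranspose, en_sq_fromRows_mulVec,
      en_sq_conjTranspose_replicateCol_mulVec]
  · rw [hPx]
    exact norm_star_dotProduct_sq_div_le hp3 (by rw [mulVec_mulVec, hp1]) x
  · rw [hPx] at hne ⊢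
    exact norm_star_dotProduct_sq_div_self hp3 hPP x hne

theorem stmt5 {n k j : ℕ}
    (W : Matrix (Fin n) (Fin k) ℂ) (hW : Wᴴ * W = 1)
    (R : Matrix (Fin n) (Fin j) ℂ) (hWR : Wᴴ * R = 0)
    -- `Rp` is the Moore–Penrose pseudoinverse of `R`, characterized by the Penrose conditions:
    (Rp : Matrix (Fin j) (Fin n) ℂ)
    (hp1 : R * Rp * R = R) (hp2 : Rp * R * Rp = Rp)
    (hp3 : (R * Rp)ᴴ = R * Rp) (hp4 : (Rp * R)ᴴ = Rp * R)
    (x : Fin n → ℂ) (hx : en x = 1)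
    (c : Fin j → ℂ) (r : Fin n → ℂ) (hr : r = R.mulVec c) :
    -- ‖[W r]* x‖² = ‖W* x‖² + |r* x|²
    en ((Matrix.fromCols W (Matrix.replicateCol (Fin 1) r))ᴴ.mulVec x) ^ 2
        = en (Wᴴ.mulVec x) ^ 2 + ‖star r ⬝ᵥ x‖ ^ 2 ∧
    -- the choice c = R⁺ x maximizes |r*x|²/‖r‖², achieving the value ‖R R⁺ x‖²
    (∀ c' : Fin j → ℂ, R.mulVec c' ≠ 0 →
        ‖star (R.mulVec c') ⬝ᵥ x‖ ^ 2 / en (R.mulVec c') ^ 2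
          ≤ en (R.mulVec (Rp.mulVec x)) ^ 2) ∧
    (R.mulVec (Rp.mulVec x) ≠ 0 →
        ‖star (R.mulVec (Rp.mulVec x)) ⬝ᵥ x‖ ^ 2 / en (R.mulVec (Rp.mulVec x)) ^ 2
          = en (R.mulVec (Rp.mulVec x)) ^ 2) :=
  stmt5_general W R Rp hp1 hp3 x r
end
end

section
/- Let A be m×n and B p×n with Null(A) ∩ Null(B) = {0}, and W_k an n×k matrix with orthonormal columns such that AW_k = U_k H_k and BW_k = V_k K_k (reduced QR). Then Null(H_k) ∩ Null(K_k) = {0}. -/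
open Matrix

theorem stmt6 {m p n k : ℕ}
    (A : Matrix (Fin m) (Fin n) ℂ) (B : Matrix (Fin p) (Fin n) ℂ)
    (hker : ∀ x : Fin n → ℂ, A.mulVec x = 0 → B.mulVec x = 0 → x = 0)
    (W : Matrix (Fin n) (Fin k) ℂ) (hW : Wᴴ * W = 1)
    (U : Matrix (Fin m) (Fin k) ℂ) (hU : Uᴴ * U = 1)
    (V : Matrix (Fin p) (Fin k) ℂ) (hV : Vᴴ * V = 1)
    (H K : Matrix (Fin k) (Fin k) ℂ)
    (hA : A * W = U * H) (hB : B * W = V * K) :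
    ∀ x : Fin k → ℂ, H.mulVec x = 0 → K.mulVec x = 0 → x = 0 := by
  intro x hH hK
  have hAW : A.mulVec (W.mulVec x) = 0 := by
    rw [mulVec_mulVec, hA, ← mulVec_mulVec, hH, mulVec_zero]
  have hBW : B.mulVec (W.mulVec x) = 0 := by
    rw [mulVec_mulVec, hB, ← mulVec_mulVec, hK, mulVec_zero]
  have hWx : W.mulVec x = 0 := hker _ hAW hBW
  calc x = (Wᴴ * W).mulVec x := by rw [hW, one_mulVec]
    _ = Wᴴ.mulVec (W.mulVec x) := by rw [mulVec_mulVec]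
    _ = 0 := by rw [hWx, mulVec_zero]
end

section
/- Let M be an n×n Hermitian positive definite matrix with extreme eigenvalues λ₁ ≥ λ_n > 0 and condition number κ = λ₁/λ_n, and let f be a nonzero vector. Then 1 − |f*Mf|²/(‖Mf‖²‖f‖²) ≤ ((κ−1)/(κ+1))². -/
open Matrix
open scoped ComplexOrder

noncomputable section

lemma aux_dot {n : ℕ} (v : Fin n → ℂ) :
    star v ⬝ᵥ v = ((∑ i, ‖v i‖ ^ 2 : ℝ) : ℂ) := by
  push_cast
  simp only [dotProduct, Pi.star_apply, RCLike.star_def]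
  refine Finset.sum_congr rfl fun i _ => ?_
  rw [mul_comm, Complex.mul_conj']

lemma aux_unitary {n : ℕ} {A : Matrix (Fin n) (Fin n) ℂ} (h : star A * A = 1)
    (y : Fin n → ℂ) : ∑ i, ‖(A *ᵥ y) i‖ ^ 2 = ∑ i, ‖y i‖ ^ 2 := by
  have h1 : star (A *ᵥ y) ⬝ᵥ (A *ᵥ y) = star y ⬝ᵥ y := by
    rw [star_mulVec, dotProduct_mulVec, vecMul_vecMul, ← star_eq_conjTranspose, h, vecMul_one]
  rw [aux_dot, aux_dot] at h1
  exact_mod_cast h1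

lemma aux_real {n : ℕ} (lam w : Fin n → ℝ) (L m : ℝ) (hm : 0 < m) (hLm : m ≤ L)
    (hw : ∀ i, 0 ≤ w i) (hlo : ∀ i, m ≤ lam i) (hhi : ∀ i, lam i ≤ L)
    (hB : 0 < ∑ i, w i) :
    1 - (∑ i, lam i * w i) ^ 2 / ((∑ i, lam i ^ 2 * w i) * (∑ i, w i))
      ≤ ((L / m - 1) / (L / m + 1)) ^ 2 := by
  set A := ∑ i, lam i ^ 2 * w i with hA
  set B := ∑ i, w i with hBdef
  set C := ∑ i, lam i * w i with hC
  have hApos : 0 < A := by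
    have : (0:ℝ) < ∑ i, m ^ 2 * w i := by
      rw [← Finset.mul_sum]; positivity
    refine lt_of_lt_of_le this (Finset.sum_le_sum fun i _ => ?_)
    have h2 : m ^ 2 ≤ lam i ^ 2 := by nlinarith [hlo i]
    exact mul_le_mul_of_nonneg_right h2 (hw i)
  have hkey : A ≤ (L + m) * C - L * m * B := by
    rw [hC, hBdef, hA, Finset.mul_sum, Finset.mul_sum, ← Finset.sum_sub_distrib]
    refine Finset.sum_le_sum fun i _ => ?_
    nlinarith [mul_nonneg (mul_nonneg (sub_nonneg.2 (hlo i)) (sub_nonneg.2 (hhi i))) (hw i)]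
  have hAB : 4 * L * m * (A * B) ≤ (L + m) ^ 2 * C ^ 2 := by
    nlinarith [sq_nonneg ((L + m) * C - 2 * L * m * B), mul_le_mul_of_nonneg_right hkey hB.le,
      mul_pos hm (lt_of_lt_of_le hm hLm)]
  have hQ : 4 * L * m / (L + m) ^ 2 ≤ C ^ 2 / (A * B) := by
    rw [div_le_div_iff₀ (by nlinarith : (0:ℝ) < (L + m) ^ 2) (mul_pos hApos hB)]
    nlinarith
  have hLm0 : (0:ℝ) < L + m := by linarith
  have hrw : (L / m - 1) / (L / m + 1) = (L - m) / (L + m) := by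
    have h1 : m ≠ 0 := hm.ne'
    have h2 : L + m ≠ 0 := hLm0.ne'
    rw [div_sub_one h1, div_add_one h1]
    field_simp
  rw [hrw, div_pow]
  have heq : (L - m) ^ 2 / (L + m) ^ 2 = 1 - 4 * L * m / (L + m) ^ 2 := by
    rw [eq_sub_iff_add_eq, ← add_div,
      show (L - m) ^ 2 + 4 * L * m = (L + m) ^ 2 by ring, div_self (by positivity)]
  rw [heq]
  linarith

/-- Kantorovich inequality / one-step steepest-descent bound: for a Hermitian positive
definite `M` with extreme eigenvalues `λ₁ ≥ λ_n > 0` and condition number `κ = λ₁/λ_n`,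
`1 − |f*Mf|²/(‖Mf‖²‖f‖²) ≤ ((κ−1)/(κ+1))²` for every nonzero `f`. -/
theorem stmt7 {n : ℕ} (M : Matrix (Fin n) (Fin n) ℂ) (hM : M.PosDef)
    (f : Fin n → ℂ) (hf : f ≠ 0)
    (κ : ℝ) (hκ : κ = (⨆ i, hM.1.eigenvalues i) / (⨅ i, hM.1.eigenvalues i)) :
    1 - ‖star f ⬝ᵥ M.mulVec f‖ ^ 2 / (en (M.mulVec f) ^ 2 * en f ^ 2)
      ≤ ((κ - 1) / (κ + 1)) ^ 2 := by
  have hH := hM.1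
  rcases Nat.eq_zero_or_pos n with hn | hn
  · subst hn; exact absurd (Subsingleton.elim f 0) hf
  have : NeZero n := ⟨hn.ne'⟩
  set lam := hH.eigenvalues with hlam
  set U : Matrix (Fin n) (Fin n) ℂ := (hH.eigenvectorUnitary : Matrix (Fin n) (Fin n) ℂ) with hU
  have hU1 : star U * U = 1 := (Matrix.mem_unitaryGroup_iff').mp hH.eigenvectorUnitary.2
  have hU2 : U * star U = 1 := (Matrix.mem_unitaryGroup_iff).mp hH.eigenvectorUnitary.2
  have hU1' : star (star U) * star U = 1 := by rw [star_star]; exact hU2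
  set c : Fin n → ℂ := star U *ᵥ f with hc
  set w : Fin n → ℝ := fun i => ‖c i‖ ^ 2 with hw
  set L := ⨆ i, lam i with hL
  set m := ⨅ i, lam i with hm
  -- eigenvalue bounds
  have hlo : ∀ i, m ≤ lam i := fun i => ciInf_le (Set.Finite.bddBelow (Set.finite_range lam)) i
  have hhi : ∀ i, lam i ≤ L := fun i => le_ciSup (Set.Finite.bddAbove (Set.finite_range lam)) i
  have hmpos : 0 < m := by
    obtain ⟨i, hi⟩ := exists_eq_ciInf_of_finite (f := lam)
    rw [hm, ← hi]; exact hM.eigenvalues_pos i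
  have hLm : m ≤ L := le_trans (hlo ⟨0, hn⟩) (hhi ⟨0, hn⟩)
  -- spectral decomposition facts
  have hMf : M *ᵥ f = U *ᵥ (diagonal (RCLike.ofReal ∘ lam) *ᵥ c) := by
    conv_lhs => rw [hH.spectral_theorem, Unitary.conjStarAlgAut_apply]
    rw [← hU, ← mulVec_mulVec, ← mulVec_mulVec, hc]
  have hsc : star c = star f ᵥ* U := by
    rw [hc, star_mulVec, ← star_eq_conjTranspose, star_star]
  -- norm of f equals norm of c
  have hfc : ∑ i, ‖c i‖ ^ 2 = ∑ i, ‖f i‖ ^ 2 := aux_unitary hU1' f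
  -- quadratic form
  have hquad : star f ⬝ᵥ M *ᵥ f = ((∑ i, lam i * w i : ℝ) : ℂ) := by
    rw [hMf, dotProduct_mulVec, ← hsc]
    simp only [dotProduct, mulVec_diagonal, Function.comp_apply, Pi.star_apply,
      RCLike.star_def, hw, Complex.coe_algebraMap]
    push_cast
    refine Finset.sum_congr rfl fun i _ => ?_
    rw [show ((‖c i‖ : ℂ)) ^ 2 = c i * (starRingEnd ℂ) (c i) from (Complex.mul_conj' _).symm]
    ring
  -- norm of Mf
  have hMfn : ∑ i, ‖(M *ᵥ f) i‖ ^ 2 = ∑ i, lam i ^ 2 * w i := by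
    rw [hMf, aux_unitary hU1]
    refine Finset.sum_congr rfl fun i _ => ?_
    simp only [mulVec_diagonal, Function.comp_apply, hw]
    rw [norm_mul, mul_pow, RCLike.norm_ofReal, sq_abs]
  -- positivity of data
  have hwpos : ∀ i, 0 ≤ w i := fun i => sq_nonneg _
  have hBpos : 0 < ∑ i, w i := by
    rw [show (∑ i, w i) = ∑ i, ‖c i‖ ^ 2 from rfl, hfc]
    have : f ≠ 0 := hf
    by_contra h
    push_neg at h
    have hz : ∑ i, ‖f i‖ ^ 2 = 0 := le_antisymm h (Finset.sum_nonneg fun i _ => sq_nonneg _)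
    apply hf
    funext i
    have := (Finset.sum_eq_zero_iff_of_nonneg (fun i _ => sq_nonneg ‖f i‖)).mp hz i (Finset.mem_univ i)
    simpa [pow_eq_zero_iff] using this
  have hCpos : 0 ≤ ∑ i, lam i * w i :=
    Finset.sum_nonneg fun i _ => mul_nonneg (hmpos.le.trans (hlo i)) (hwpos i)
  -- rewrite the goal
  have hen_f : en f ^ 2 = ∑ i, w i := by
    rw [en, Real.sq_sqrt (Finset.sum_nonneg fun i _ => sq_nonneg _), ← hfc]
  have hen_Mf : en (M *ᵥ f) ^ 2 = ∑ i, lam i ^ 2 * w i := by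
    rw [en, Real.sq_sqrt (Finset.sum_nonneg fun i _ => sq_nonneg _), hMfn]
  have hnorm : ‖star f ⬝ᵥ M *ᵥ f‖ ^ 2 = (∑ i, lam i * w i) ^ 2 := by
    rw [hquad, Complex.norm_real, Real.norm_eq_abs, sq_abs]
  rw [hnorm, hen_f, hen_Mf, hκ]
  exact aux_real lam w L m hmpos hLm hwpos hlo hhi hBpos
end
end

section
/- Let x̃ and r be nonzero orthogonal vectors in ℂ^n and x a unit vector. Then sin²(span{x̃, r}, x) = (1 − cos²(r, x)/sin²(x̃, x)) · sin²(x̃, x), provided sin(x̃, x) ≠ 0, where sin²(S, x) = 1 − ‖P_S x‖² for the orthogonal projection P_S onto S, and cos(u, x) = |u*x|/(‖u‖‖x‖). -/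
/-!
Because `x̃ ⟂ r`, the projection onto `span {x̃, r}` is the sum of the projections onto the two
lines, so by Pythagoras `cos² (span {x̃, r}, x) = cos² (x̃, x) + cos² (r, x)`. Cancelling the
nonzero `sin² (x̃, x)` on the right leaves `sin² (x̃, x) - cos² (r, x)`, the same quantity.
-/

open scoped ComplexInnerProductSpace

noncomputable section

/-- `cos²` of the angle between two vectors. -/
def cos2 {n : ℕ} (u x : EuclideanSpace ℂ (Fin n)) : ℝ :=
  ‖⟪u, x⟫‖ ^ 2 / (‖u‖ ^ 2 * ‖x‖ ^ 2)

/-- `sin²` of the angle between two vectors. -/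
def sin2 {n : ℕ} (u x : EuclideanSpace ℂ (Fin n)) : ℝ := 1 - cos2 u x

open scoped InnerProductSpace

namespace Submodule

variable {𝕜 E : Type*} [RCLike 𝕜] [NormedAddCommGroup E] [InnerProductSpace 𝕜 E]

theorem IsOrtho.starProjection_sup_apply {U V : Submodule 𝕜 E} [U.HasOrthogonalProjection]
    [V.HasOrthogonalProjection] [(U ⊔ V).HasOrthogonalProjection] (h : U ⟂ V) (x : E) :
    (U ⊔ V).starProjection x = U.starProjection x + V.starProjection x := by
  refine eq_starProjection_of_mem_of_inner_eq_zero
    (add_mem_sup (starProjection_apply_mem U x) (starProjection_apply_mem V x)) ?_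
  rw [← mem_orthogonal', ← inf_orthogonal]
  constructor
  · rw [← sub_sub]
    exact sub_mem (sub_starProjection_mem_orthogonal x) (h.symm.le (starProjection_apply_mem V x))
  · rw [add_comm, ← sub_sub]
    exact sub_mem (sub_starProjection_mem_orthogonal x) (h.le (starProjection_apply_mem U x))

theorem IsOrtho.norm_sq_starProjection_sup {U V : Submodule 𝕜 E} [U.HasOrthogonalProjection]
    [V.HasOrthogonalProjection] [(U ⊔ V).HasOrthogonalProjection] (h : U ⟂ V) (x : E) :
    ‖(U ⊔ V).starProjection x‖ ^ 2 = ‖U.starProjection x‖ ^ 2 + ‖V.starProjection x‖ ^ 2 := by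
  rw [h.starProjection_sup_apply, sq, sq, sq,
    norm_add_sq_eq_norm_sq_add_norm_sq_of_inner_eq_zero _ _
      (h.inner_eq (starProjection_apply_mem U x) (starProjection_apply_mem V x))]

theorem norm_sq_starProjection_singleton (v x : E) :
    ‖(𝕜 ∙ v).starProjection x‖ ^ 2 = ‖⟪v, x⟫_𝕜‖ ^ 2 / ‖v‖ ^ 2 := by
  rcases eq_or_ne v 0 with rfl | hv
  · simp
  have hv' : ‖v‖ ≠ 0 := norm_ne_zero_iff.2 hv
  rw [starProjection_singleton, norm_smul, norm_div, RCLike.norm_ofReal, abs_sq]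
  field_simp

theorem norm_sq_starProjection_span_pair {u v : E} [(span 𝕜 {u, v}).HasOrthogonalProjection]
    (h : ⟪u, v⟫_𝕜 = 0) (x : E) :
    ‖(span 𝕜 {u, v}).starProjection x‖ ^ 2
      = ‖⟪u, x⟫_𝕜‖ ^ 2 / ‖u‖ ^ 2 + ‖⟪v, x⟫_𝕜‖ ^ 2 / ‖v‖ ^ 2 := by
  have hortho : (𝕜 ∙ u) ⟂ (𝕜 ∙ v) := isOrtho_span.2 (by simpa using h)
  rw [← norm_sq_starProjection_singleton, ← norm_sq_starProjection_singleton,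
    ← hortho.norm_sq_starProjection_sup]
  congr!
  exact span_insert u {v}

end Submodule

theorem cos2_of_norm_eq_one {n : ℕ} (u : EuclideanSpace ℂ (Fin n)) {x : EuclideanSpace ℂ (Fin n)}
    (hx : ‖x‖ = 1) : cos2 u x = ‖⟪u, x⟫‖ ^ 2 / ‖u‖ ^ 2 := by
  rw [cos2, hx, one_pow, mul_one]

theorem stmt8_general {n : ℕ} (xt r x : EuclideanSpace ℂ (Fin n))
    (horth : ⟪xt, r⟫ = 0) (hx : ‖x‖ = 1)
    (hsin : sin2 xt x ≠ 0) :
    1 - ‖(Submodule.orthogonalProjectionOnto (Submodule.span ℂ {xt, r}) x : EuclideanSpace ℂ (Fin n))‖ ^ 2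
      = (1 - cos2 r x / sin2 xt x) * sin2 xt x := by
  rw [← Submodule.starProjection_apply, Submodule.norm_sq_starProjection_span_pair horth,
    ← cos2_of_norm_eq_one xt hx, ← cos2_of_norm_eq_one r hx, sub_mul, one_mul,
    div_mul_cancel₀ _ hsin, sin2]
  ring

theorem stmt8 {n : ℕ} (xt r x : EuclideanSpace ℂ (Fin n))
    (hxt : xt ≠ 0) (hr : r ≠ 0) (horth : ⟪xt, r⟫ = 0) (hx : ‖x‖ = 1)
    (hsin : sin2 xt x ≠ 0) :
    1 - ‖(Submodule.orthogonalProjectionOnto (Submodule.span ℂ {xt, r}) x : EuclideanSpace ℂ (Fin n))‖ ^ 2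
      = (1 - cos2 r x / sin2 xt x) * sin2 xt x :=
  stmt8_general xt r x horth hx hsin
end
end

section
/- Let M be Hermitian positive definite and w a unit vector. Then the operator norm of the oblique projector P = (w w* M)/(w* M w) satisfies ‖P‖ = ‖M w‖/(w* M w) ≤ (κ+1)/(2√κ), where κ = λ_max(M)/λ_min(M). -/
/-!
Write `c = w* M w`. The matrix `P` is the rank-one operator `x ↦ ⟪M w, x⟫ w / c`, so its norm is
`‖w‖ ‖M w‖ / c`. For the bound, the eigenvalues of `M` lie in `[m, L]`, hence
`(L - M)(M - m) ⪰ 0`; evaluated at `w` this reads `‖M w‖² + m L ≤ (m + L) c`, and AM-GM,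
`2 √(m L) ‖M w‖ ≤ ‖M w‖² + m L`, gives `‖M w‖ / c ≤ (m + L) / (2 √(m L)) = (κ + 1) / (2 √κ)`.
-/

open Matrix
open scoped ComplexOrder

noncomputable section

lemma en_eq_norm_toLp_s13 {n : Type*} [Fintype n] (v : n → ℂ) :
    en v = ‖(WithLp.toLp 2 v : EuclideanSpace ℂ n)‖ := by
  rw [EuclideanSpace.norm_eq]; rfl

lemma EuclideanSpace.norm_toLp_sq {𝕜 n : Type*} [RCLike 𝕜] [Fintype n] (v : n → 𝕜) :
    ‖(WithLp.toLp 2 v : EuclideanSpace 𝕜 n)‖ ^ 2 = RCLike.re (star v ⬝ᵥ v) := by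
  rw [@norm_sq_eq_re_inner 𝕜, EuclideanSpace.inner_toLp_toLp, dotProduct_comm]

lemma div_le_add_one_div_two_mul_sqrt_of_sq_le {m L c e : ℝ} (hm : 0 < m) (hL : 0 < L)
    (hc : 0 < c) (h : e ^ 2 ≤ (m + L) * c - m * L) :
    e / c ≤ (L / m + 1) / (2 * √(L / m)) := by
  set s := √(L / m)
  have hs : 0 < s := Real.sqrt_pos.2 (div_pos hL hm)
  have hL_eq : s ^ 2 * m = L := by rw [Real.sq_sqrt (div_pos hL hm).le]; field_simp
  have amgm : 2 * (s * m) * e ≤ e ^ 2 + L * m := by nlinarith [sq_nonneg (e - s * m)]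
  rw [div_le_div_iff₀ hc (by positivity)]
  refine le_of_mul_le_mul_left ?_ hm
  calc m * (e * (2 * s)) = 2 * (s * m) * e := by ring
    _ ≤ (m + L) * c := by linarith
    _ = m * ((L / m + 1) * c) := by field_simp; ring

namespace Matrix

variable {𝕜 n : Type*} [RCLike 𝕜] [Fintype n] [DecidableEq n]

lemma norm_toEuclideanCLM_vecMulVec (x y : n → 𝕜) :
    ‖toEuclideanCLM (𝕜 := 𝕜) (vecMulVec x (star y))‖ =
      ‖(WithLp.toLp 2 x : EuclideanSpace 𝕜 n)‖ * ‖(WithLp.toLp 2 y : EuclideanSpace 𝕜 n)‖ := by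
  have : toEuclideanCLM (𝕜 := 𝕜) (vecMulVec x (star y)) =
      InnerProductSpace.rankOne 𝕜 (WithLp.toLp 2 x : EuclideanSpace 𝕜 n) (WithLp.toLp 2 y) := by
    apply ContinuousLinearMap.coe_injective
    rw [coe_toEuclideanCLM_eq_toEuclideanLin, ← InnerProductSpace.symm_toEuclideanLin_rankOne,
      LinearEquiv.apply_symm_apply]
  rw [this, InnerProductSpace.norm_rankOne]

lemma IsHermitian.norm_toEuclideanCLM_vecMulVec_mul {M : Matrix n n 𝕜} (hM : M.IsHermitian)
    (w : n → 𝕜) :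
    ‖toEuclideanCLM (𝕜 := 𝕜) (vecMulVec w (star w) * M)‖ =
      ‖(WithLp.toLp 2 w : EuclideanSpace 𝕜 n)‖ *
        ‖(WithLp.toLp 2 (M *ᵥ w) : EuclideanSpace 𝕜 n)‖ := by
  rw [vecMulVec_mul, ← hM.eq, ← star_mulVec, norm_toEuclideanCLM_vecMulVec, hM.eq]

open scoped MatrixOrder in
lemma IsHermitian.posSemidef_sub_mul_sub {M : Matrix n n 𝕜} (hM : M.IsHermitian) {m L : ℝ}
    (hm : ∀ i, m ≤ hM.eigenvalues i) (hL : ∀ i, hM.eigenvalues i ≤ L) :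
    ((L • 1 - M) * (M - m • 1)).PosSemidef := by
  have hM' : IsSelfAdjoint M := hM
  have hcfc : (L • 1 - M) * (M - m • 1) = cfc (fun x : ℝ => (L - x) * (x - m)) M := by
    rw [cfc_mul .., cfc_sub .., cfc_sub .., cfc_const .., cfc_const .., cfc_id' ..]
    simp only [Algebra.algebraMap_eq_smul_one]
  rw [← nonneg_iff_posSemidef, hcfc]
  refine cfc_nonneg fun x hx => ?_
  obtain ⟨i, rfl⟩ := hM.spectrum_real_eq_range_eigenvalues ▸ hx
  exact mul_nonneg (sub_nonneg.2 (hL i)) (sub_nonneg.2 (hm i))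

lemma IsHermitian.norm_mulVec_sq_le {M : Matrix n n 𝕜} (hM : M.IsHermitian) {m L : ℝ}
    (hm : ∀ i, m ≤ hM.eigenvalues i) (hL : ∀ i, hM.eigenvalues i ≤ L) (x : n → 𝕜) :
    ‖(WithLp.toLp 2 (M *ᵥ x) : EuclideanSpace 𝕜 n)‖ ^ 2 ≤
      (m + L) * RCLike.re (star x ⬝ᵥ M *ᵥ x) -
        m * L * ‖(WithLp.toLp 2 x : EuclideanSpace 𝕜 n)‖ ^ 2 := by
  have hquad := RCLike.nonneg_iff.1 ((hM.posSemidef_sub_mul_sub hm hL).dotProduct_mulVec_nonneg x)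
  have hMM : star x ⬝ᵥ M *ᵥ (M *ᵥ x) = star (M *ᵥ x) ⬝ᵥ M *ᵥ x := by
    rw [dotProduct_mulVec, star_mulVec, hM.eq]
  rw [EuclideanSpace.norm_toLp_sq, EuclideanSpace.norm_toLp_sq]
  simp only [sub_mul, mul_sub, ← mulVec_mulVec, sub_mulVec, smul_mulVec, one_mulVec, mulVec_smul,
    dotProduct_sub, dotProduct_smul, hMM, map_sub, RCLike.smul_re] at hquad
  linarith [hquad.1]

end Matrix

theorem stmt13 {n : ℕ} (M : Matrix (Fin n) (Fin n) ℂ) (hM : M.PosDef)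
    (w : Fin n → ℂ) (hw : en w = 1)
    (κ : ℝ) (hκ : κ = (⨆ i, hM.1.eigenvalues i) / (⨅ i, hM.1.eigenvalues i))
    (P : Matrix (Fin n) (Fin n) ℂ)
    (hP : P = (star w ⬝ᵥ M.mulVec w)⁻¹ • (Matrix.vecMulVec w (star w) * M)) :
    ‖Matrix.toEuclideanCLM (𝕜 := ℂ) P‖ = en (M.mulVec w) / (star w ⬝ᵥ M.mulVec w).re ∧
      en (M.mulVec w) / (star w ⬝ᵥ M.mulVec w).re ≤ (κ + 1) / (2 * Real.sqrt κ) := by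
  have hw0 : w ≠ 0 := by rintro rfl; simp [en] at hw
  set c := star w ⬝ᵥ M *ᵥ w
  have hc : 0 < c := hM.dotProduct_mulVec_pos hw0
  have hc_norm : ‖c‖ = c.re := (Complex.re_eq_norm.2 hc.le).symm
  refine ⟨?_, ?_⟩
  · rw [hP, map_smul, norm_smul, hM.1.norm_toEuclideanCLM_vecMulVec_mul, norm_inv, hc_norm,
      ← en_eq_norm_toLp_s13, ← en_eq_norm_toLp_s13, hw, one_mul, inv_mul_eq_div]
  obtain ⟨i₀, -⟩ := Function.ne_iff.1 hw0
  set eig := hM.1.eigenvalues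
  have hm : ∀ i, (⨅ i, eig i) ≤ eig i := ciInf_le (Finite.bddBelow_range _)
  have hL : ∀ i, eig i ≤ ⨆ i, eig i := le_ciSup (Finite.bddAbove_range _)
  have hm_pos : 0 < ⨅ i, eig i := by
    have : Nonempty (Fin n) := ⟨i₀⟩
    obtain ⟨i, hi⟩ := exists_eq_ciInf_of_finite (f := eig)
    exact hi ▸ hM.eigenvalues_pos i
  have hquad := hM.1.norm_mulVec_sq_le hm hL w
  rw [← en_eq_norm_toLp_s13, ← en_eq_norm_toLp_s13, hw] at hquad
  rw [hκ]
  exact div_le_add_one_div_two_mul_sqrt_of_sq_le hm_pos (hm_pos.trans_le ((hm i₀).trans (hL i₀)))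
    (Complex.pos_iff.1 hc).1 (by simpa using hquad)
end
end

section
/- Let N be Hermitian, M Hermitian positive definite, with generalized eigenvalues λ₁ ≥ … ≥ λ_n of Nx = λMx and eigenvector x₁ for λ₁. For a subspace W, let θ₁ be the largest Ritz value of (N,M) with respect to W. Then λ₁ − θ₁ ≤ (λ₁ − λ_n) · sin_M²(W, x₁). -/
open Matrix
open scoped ComplexOrder ComplexInnerProductSpace

noncomputable section

/-- The Rayleigh quotient of the pencil `(N, M)` at `w`, in Euclidean form. -/
def rayleighE {n : ℕ} (N M : Matrix (Fin n) (Fin n) ℂ) (w : EuclideanSpace ℂ (Fin n)) : ℝ :=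
  (⟪w, Matrix.toEuclideanLin N w⟫).re / (⟪w, Matrix.toEuclideanLin M w⟫).re

/-- `sin_M²(W, x) = 1 − ‖P x̂‖²` where `x̂ = Lx/‖Lx‖` and `P` is the orthogonal
projection onto `L·W`, for `M = L²`. -/
def sinM2sub {n : ℕ} (L : Matrix (Fin n) (Fin n) ℂ)
    (W : Submodule ℂ (EuclideanSpace ℂ (Fin n))) (x : EuclideanSpace ℂ (Fin n)) : ℝ :=
  1 - ‖(Submodule.orthogonalProjectionOnto (W.map (Matrix.toEuclideanLin L))
        (‖Matrix.toEuclideanLin L x‖⁻¹ • Matrix.toEuclideanLin L x)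
      : EuclideanSpace ℂ (Fin n))‖ ^ 2

/-! Substituting `z = L w` turns the pencil `(N, L²)` into the Hermitian matrix
`A = L⁻¹ N L⁻¹`, with unit eigenvector `y = L x₁ / ‖L x₁‖` for `λ₁`, and turns the Ritz bound
on `W` into `⟪p, A p⟫ ≤ θ₁ ‖p‖²` on `L W`. Decompose the projection `p` of `y` on `L W` as
`p = c y + v` with `c = ‖p‖²` and `v ⊥ y`. Then `‖v‖² = c - c²` and
`θ₁ c ≥ ⟪p, A p⟫ = λ₁ c² + ⟪v, A v⟫ ≥ λ₁ c² + λₙ (c - c²)`; dividing by `c` gives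
`λ₁ - θ₁ ≤ (λ₁ - λₙ) (1 - c)`, and `1 - c` is `sin_M²(W, x₁)`. -/

section StandardForm

variable {𝕜 E : Type*} [RCLike 𝕜] [NormedAddCommGroup E] [InnerProductSpace 𝕜 E]

open RCLike

theorem re_inner_map_smul_add_of_apply_eq_smul {A : E →ₗ[𝕜] E} (hA : A.IsSymmetric)
    {y v : E} {μ : ℝ} (hy : A y = (μ : 𝕜) • y) (hyv : inner 𝕜 y v = 0) (a : 𝕜) :
    re (inner 𝕜 (a • y + v) (A (a • y + v))) = μ * ‖a • y‖ ^ 2 + re (inner 𝕜 v (A v)) := by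
  have hcross : inner 𝕜 (a • y) (A v) = 0 := by
    rw [← hA, map_smul, hy, inner_smul_left, inner_smul_left, hyv, mul_zero, mul_zero]
  have hcross' : inner 𝕜 v (A (a • y)) = 0 := by
    rw [map_smul, hy, smul_comm, inner_smul_right, inner_smul_right, ← inner_conj_symm, hyv,
      map_zero, mul_zero, mul_zero]
  have hdiag : re (inner 𝕜 (a • y) (A (a • y))) = μ * ‖a • y‖ ^ 2 := by
    rw [map_smul, hy, smul_comm, inner_smul_right, re_ofReal_mul, inner_self_eq_norm_sq]
  rw [map_add, inner_add_left, inner_add_right, inner_add_right, hcross, hcross', add_zero,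
    zero_add, map_add, hdiag]

theorem sub_le_mul_one_sub_norm_starProjection_sq {A : E →ₗ[𝕜] E} (hA : A.IsSymmetric)
    (S : Submodule 𝕜 E) [S.HasOrthogonalProjection] {y : E} (hy1 : ‖y‖ = 1) {μ ν θ : ℝ}
    (hy : A y = (μ : 𝕜) • y) (hlow : ∀ v, ν * ‖v‖ ^ 2 ≤ re (inner 𝕜 v (A v)))
    (hS : ∀ p ∈ S, re (inner 𝕜 p (A p)) ≤ θ * ‖p‖ ^ 2) (hθ : ν ≤ θ) :
    μ - θ ≤ (μ - ν) * (1 - ‖S.starProjection y‖ ^ 2) := by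
  set p := S.starProjection y
  set c := ‖p‖ ^ 2
  set v := p - (c : 𝕜) • y
  have hpS : p ∈ S := S.starProjection_apply_mem y
  have hyp : inner 𝕜 y p = c := by
    have h := S.starProjection_inner_eq_zero y p hpS
    rw [inner_sub_left, sub_eq_zero] at h
    rw [h, inner_self_eq_norm_sq_to_K, ofReal_pow]
  have hyv : inner 𝕜 y v = 0 := by
    rw [inner_sub_right, inner_smul_right, hyp, inner_self_eq_norm_sq_to_K, hy1]
    simp
  have hp : p = (c : 𝕜) • y + v := by simp [v]
  have hcy : ‖(c : 𝕜) • y‖ = c := by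
    rw [norm_smul, hy1, mul_one, norm_ofReal, abs_of_nonneg (by positivity)]
  have hv : ‖v‖ ^ 2 = c - c ^ 2 := by
    have h := norm_add_sq_eq_norm_sq_add_norm_sq_of_inner_eq_zero ((c : 𝕜) • y) v
      (by rw [inner_smul_left, hyv, mul_zero])
    rw [← hp, hcy] at h
    linarith
  have hsplit : re (inner 𝕜 p (A p)) = μ * c ^ 2 + re (inner 𝕜 v (A v)) := by
    rw [hp, re_inner_map_smul_add_of_apply_eq_smul hA hy hyv, hcy]
  have hbound : c * (μ * c + ν * (1 - c)) ≤ c * θ := by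
    have hup : re (inner 𝕜 p (A p)) ≤ θ * c := hS p hpS
    have hlo := hlow v
    rw [hv] at hlo
    linarith
  obtain hc | hc := (sq_nonneg ‖p‖).eq_or_lt
  · rw [show c = 0 from hc.symm]
    linarith
  · linarith [le_of_mul_le_mul_left hbound hc]

end StandardForm

namespace Matrix

variable {𝕜 ι : Type*} [RCLike 𝕜] [Fintype ι] [DecidableEq ι] {L : Matrix ι ι 𝕜}

theorem IsHermitian.inv_mul_mul_inv {N : Matrix ι ι 𝕜} (hL : L.IsHermitian) (hN : N.IsHermitian) :
    (L⁻¹ * N * L⁻¹).IsHermitian := by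
  simpa only [hL.inv.eq] using isHermitian_conjTranspose_mul_mul L⁻¹ hN

theorem toEuclideanLin_inv_apply_toEuclideanLin (hL : IsUnit L.det) (x : EuclideanSpace 𝕜 ι) :
    toEuclideanLin L⁻¹ (toEuclideanLin L x) = x := by
  rw [← LinearMap.comp_apply, ← toLpLin_mul_same, nonsing_inv_mul L hL, toLpLin_one,
    LinearMap.id_apply]

theorem toEuclideanLin_apply_toEuclideanLin_inv (hL : IsUnit L.det) (x : EuclideanSpace 𝕜 ι) :
    toEuclideanLin L (toEuclideanLin L⁻¹ x) = x := by
  rw [← LinearMap.comp_apply, ← toLpLin_mul_same, mul_nonsing_inv L hL, toLpLin_one,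
    LinearMap.id_apply]

theorem toEuclideanLin_apply_ne_zero (hL : IsUnit L.det) {x : EuclideanSpace 𝕜 ι} (hx : x ≠ 0) :
    toEuclideanLin L x ≠ 0 := fun h ↦
  hx (by rw [← toEuclideanLin_inv_apply_toEuclideanLin hL x, h, map_zero])

theorem re_inner_toEuclideanLin_mul_self (hL : L.IsHermitian) (w : EuclideanSpace 𝕜 ι) :
    RCLike.re (inner 𝕜 w (toEuclideanLin (L * L) w)) = ‖toEuclideanLin L w‖ ^ 2 := by
  rw [toLpLin_mul_same, LinearMap.comp_apply, ← isSymmetric_toEuclideanLin_iff.2 hL,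
    inner_self_eq_norm_sq]

theorem inner_toEuclideanLin_eq_inner_inv_mul_mul_inv (hL : L.IsHermitian) (hdet : IsUnit L.det)
    (N : Matrix ι ι 𝕜) (w : EuclideanSpace 𝕜 ι) :
    inner 𝕜 w (toEuclideanLin N w) =
      inner 𝕜 (toEuclideanLin L w) (toEuclideanLin (L⁻¹ * N * L⁻¹) (toEuclideanLin L w)) := by
  rw [toLpLin_mul_same, toLpLin_mul_same, LinearMap.comp_apply, LinearMap.comp_apply,
    toEuclideanLin_inv_apply_toEuclideanLin hdet, ← isSymmetric_toEuclideanLin_iff.2 hL.inv,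
    toEuclideanLin_inv_apply_toEuclideanLin hdet]

theorem toEuclideanLin_inv_mul_mul_inv_apply_of_apply_eq_smul (hdet : IsUnit L.det)
    {N : Matrix ι ι 𝕜} {x : EuclideanSpace 𝕜 ι} {μ : 𝕜}
    (hx : toEuclideanLin N x = μ • toEuclideanLin (L * L) x) :
    toEuclideanLin (L⁻¹ * N * L⁻¹) (toEuclideanLin L x) = μ • toEuclideanLin L x := by
  rw [toLpLin_mul_same, toLpLin_mul_same, LinearMap.comp_apply, LinearMap.comp_apply,
    toEuclideanLin_inv_apply_toEuclideanLin hdet, hx, map_smul, toLpLin_mul_same,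
    LinearMap.comp_apply, toEuclideanLin_inv_apply_toEuclideanLin hdet]

end Matrix

section Rayleigh

variable {n : ℕ} {N L : Matrix (Fin n) (Fin n) ℂ}

theorem rayleighE_mul_self (hL : L.PosDef) (w : EuclideanSpace ℂ (Fin n)) :
    rayleighE N (L * L) w =
      (⟪toEuclideanLin L w, toEuclideanLin (L⁻¹ * N * L⁻¹) (toEuclideanLin L w)⟫).re /
        ‖toEuclideanLin L w‖ ^ 2 := by
  rw [rayleighE,
    inner_toEuclideanLin_eq_inner_inv_mul_mul_inv hL.isHermitian hL.det_pos.ne'.isUnit]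
  congr 1
  exact re_inner_toEuclideanLin_mul_self hL.isHermitian w

theorem mul_norm_sq_le_re_inner_of_forall_le_rayleighE (hL : L.PosDef) {ν : ℝ}
    (h : ∀ w, w ≠ 0 → ν ≤ rayleighE N (L * L) w) (v : EuclideanSpace ℂ (Fin n)) :
    ν * ‖v‖ ^ 2 ≤ (⟪v, toEuclideanLin (L⁻¹ * N * L⁻¹) v⟫).re := by
  have hdet : IsUnit L.det := hL.det_pos.ne'.isUnit
  obtain ⟨w, rfl⟩ : ∃ w, toEuclideanLin L w = v :=
    ⟨_, toEuclideanLin_apply_toEuclideanLin_inv hdet v⟩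
  rcases eq_or_ne w 0 with rfl | hw
  · simp
  have hpos : 0 < ‖toEuclideanLin L w‖ ^ 2 :=
    pow_pos (norm_pos_iff.2 (toEuclideanLin_apply_ne_zero hdet hw)) 2
  have hν := h w hw
  rwa [rayleighE_mul_self hL, le_div_iff₀ hpos] at hν

theorem re_inner_le_mul_norm_sq_of_forall_rayleighE_le (hL : L.PosDef)
    {W : Submodule ℂ (EuclideanSpace ℂ (Fin n))} {θ : ℝ}
    (h : ∀ w ∈ W, w ≠ 0 → rayleighE N (L * L) w ≤ θ) :
    ∀ p ∈ W.map (toEuclideanLin L),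
      (⟪p, toEuclideanLin (L⁻¹ * N * L⁻¹) p⟫).re ≤ θ * ‖p‖ ^ 2 := by
  have hdet : IsUnit L.det := hL.det_pos.ne'.isUnit
  rintro _ ⟨w, hwW, rfl⟩
  rcases eq_or_ne w 0 with rfl | hw
  · simp
  have hpos : 0 < ‖toEuclideanLin L w‖ ^ 2 :=
    pow_pos (norm_pos_iff.2 (toEuclideanLin_apply_ne_zero hdet hw)) 2
  have hθ := h w hwW hw
  rwa [rayleighE_mul_self hL, div_le_iff₀ hpos] at hθ

end Rayleigh

theorem stmt15_general {n : ℕ} (N M L : Matrix (Fin n) (Fin n) ℂ)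
    (hN : N.IsHermitian) (hL : L.PosDef) (hML : M = L * L)
    (lam1 lamn : ℝ) (x1 : EuclideanSpace ℂ (Fin n)) (hx1 : x1 ≠ 0)
    (heig : Matrix.toEuclideanLin N x1 = (lam1 : ℂ) • Matrix.toEuclideanLin M x1)
    (hray : ∀ w : EuclideanSpace ℂ (Fin n), w ≠ 0 →
      lamn ≤ rayleighE N M w ∧ rayleighE N M w ≤ lam1)
    (W : Submodule ℂ (EuclideanSpace ℂ (Fin n)))
    (w1 : EuclideanSpace ℂ (Fin n)) (hw1 : w1 ≠ 0)
    (θ1 : ℝ) (hθ : θ1 = rayleighE N M w1)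
    (hmax : ∀ w ∈ W, w ≠ 0 → rayleighE N M w ≤ θ1) :
    lam1 - θ1 ≤ (lam1 - lamn) * sinM2sub L W x1 := by
  subst hML
  have hdet : IsUnit L.det := hL.det_pos.ne'.isUnit
  set A := toEuclideanLin (L⁻¹ * N * L⁻¹)
  set z := toEuclideanLin L x1
  have hz : z ≠ 0 := toEuclideanLin_apply_ne_zero hdet hx1
  have hAz : A z = (lam1 : ℂ) • z :=
    toEuclideanLin_inv_mul_mul_inv_apply_of_apply_eq_smul hdet heig
  have hAy : A (‖z‖⁻¹ • z) = (lam1 : ℂ) • (‖z‖⁻¹ • z) := by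
    rw [LinearMap.map_smul_of_tower, hAz, smul_comm]
  have hθn : lamn ≤ θ1 := hθ ▸ (hray w1 hw1).1
  exact sub_le_mul_one_sub_norm_starProjection_sq
    (isSymmetric_toEuclideanLin_iff.2 (hL.isHermitian.inv_mul_mul_inv hN))
    (W.map (toEuclideanLin L)) (norm_smul_inv_norm hz) hAy
    (mul_norm_sq_le_re_inner_of_forall_le_rayleighE hL fun w hw ↦ (hray w hw).1)
    (re_inner_le_mul_norm_sq_of_forall_rayleighE_le hL hmax) hθn

theorem stmt15 {n : ℕ} (N M L : Matrix (Fin n) (Fin n) ℂ)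
    (hN : N.IsHermitian) (hM : M.PosDef) (hL : L.PosDef) (hML : M = L * L)
    (lam1 lamn : ℝ) (x1 : EuclideanSpace ℂ (Fin n)) (hx1 : x1 ≠ 0)
    (heig : Matrix.toEuclideanLin N x1 = (lam1 : ℂ) • Matrix.toEuclideanLin M x1)
    (hray : ∀ w : EuclideanSpace ℂ (Fin n), w ≠ 0 →
      lamn ≤ rayleighE N M w ∧ rayleighE N M w ≤ lam1)
    (W : Submodule ℂ (EuclideanSpace ℂ (Fin n)))
    (w1 : EuclideanSpace ℂ (Fin n)) (hw1W : w1 ∈ W) (hw1 : w1 ≠ 0)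
    (θ1 : ℝ) (hθ : θ1 = rayleighE N M w1)
    (hmax : ∀ w ∈ W, w ≠ 0 → rayleighE N M w ≤ θ1) :
    lam1 - θ1 ≤ (lam1 - lamn) * sinM2sub L W x1 :=
  stmt15_general N M L hN hL hML lam1 lamn x1 hx1 heig hray W w1 hw1 θ1 hθ hmax
end
end

section
/- Bauer–Fike for the GSVD: Let (A,B) have GSVD A = U Σ_A X^{-1}, B = V Σ_B X^{-1} with generalized singular pairs (c_j, s_j). Let (c̃, s̃) be an approximate pair with approximate vector x̃ ≠ 0 and residual r = (s̃² A*A − c̃² B*B) x̃. Then there exists a pair (c_⋆, s_⋆) among the (c_j, s_j) such that |s̃² c_⋆² − c̃² s_⋆²| ≤ ‖X‖² · ‖r‖/‖x̃‖. -/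
open Matrix

noncomputable section

/-! With `Y = X⁻¹`, the GSVD turns `s̃² AᴴA - c̃² BᴴB` into the congruence `Yᴴ D Y` of the diagonal
matrix `D = diag (s̃² c_j² - c̃² s_j²)`, so `Xᴴ r = D (Y x̃)`. If `|d_j|` is the smallest diagonal
entry of `D`, then `|d_j| ‖x̃‖ ≤ ‖X‖ |d_j| ‖Y x̃‖ ≤ ‖X‖ ‖D Y x̃‖ = ‖X‖ ‖Xᴴ r‖ ≤ ‖X‖² ‖r‖`. -/

section EuclideanNorm

variable {ι : Type*} [Fintype ι]

lemma en_pos {v : ι → ℂ} (hv : v ≠ 0) : 0 < en v := by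
  rw [en_eq_norm_toLp]
  exact norm_pos_iff.mpr ((WithLp.toLp_eq_zero 2).not.mpr hv)

lemma en_mulVec_le [DecidableEq ι] (M : Matrix ι ι ℂ) (v : ι → ℂ) :
    en (M *ᵥ v) ≤ ‖toEuclideanCLM (𝕜 := ℂ) M‖ * en v := by
  simpa only [en_eq_norm_toLp, toEuclideanCLM_toLp] using
    (toEuclideanCLM (𝕜 := ℂ) M).le_opNorm (WithLp.toLp 2 v)

lemma mul_en_le_en_diagonal_mulVec [DecidableEq ι] {d : ι → ℂ} {a : ℝ} (ha : 0 ≤ a)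
    (hd : ∀ i, a ≤ ‖d i‖) (v : ι → ℂ) : a * en v ≤ en (diagonal d *ᵥ v) := by
  rw [en, en, ← Real.sqrt_sq ha, ← Real.sqrt_mul (sq_nonneg a), Finset.mul_sum]
  gcongr with i
  rw [mulVec_diagonal, norm_mul, mul_pow]
  gcongr
  exact hd i

lemma norm_toEuclideanCLM_conjTranspose [DecidableEq ι] (X : Matrix ι ι ℂ) :
    ‖toEuclideanCLM (𝕜 := ℂ) Xᴴ‖ = ‖toEuclideanCLM (𝕜 := ℂ) X‖ := by
  rw [← star_eq_conjTranspose, map_star, ContinuousLinearMap.star_eq_adjoint,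
    LinearIsometryEquiv.norm_map]

end EuclideanNorm

lemma mul_en_le_sq_norm_mul_en_congr_diagonal_mulVec {ι : Type*} [Fintype ι] [DecidableEq ι]
    {X : Matrix ι ι ℂ} (hX : IsUnit X.det) {d : ι → ℂ} {a : ℝ} (ha : 0 ≤ a)
    (hd : ∀ i, a ≤ ‖d i‖) (v : ι → ℂ) :
    a * en v ≤ ‖toEuclideanCLM (𝕜 := ℂ) X‖ ^ 2 * en ((X⁻¹ᴴ * diagonal d * X⁻¹) *ᵥ v) := by
  set N := ‖toEuclideanCLM (𝕜 := ℂ) X‖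
  set M := X⁻¹ᴴ * diagonal d * X⁻¹
  set y := X⁻¹ *ᵥ v
  have hv : v = X *ᵥ y := by
    rw [mulVec_mulVec, mul_nonsing_inv _ hX, one_mulVec]
  have hMv : Xᴴ *ᵥ (M *ᵥ v) = diagonal d *ᵥ y := by
    rw [mulVec_mulVec, ← Matrix.mul_assoc, ← Matrix.mul_assoc, ← conjTranspose_mul,
      nonsing_inv_mul _ hX, conjTranspose_one, Matrix.one_mul, ← mulVec_mulVec]
  calc a * en v ≤ a * (N * en y) := by
        rw [hv]; gcongr; exact en_mulVec_le X y
    _ = N * (a * en y) := by ring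
    _ ≤ N * en (diagonal d *ᵥ y) := by gcongr; exact mul_en_le_en_diagonal_mulVec ha hd y
    _ = N * en (Xᴴ *ᵥ (M *ᵥ v)) := by rw [hMv]
    _ ≤ N * (N * en (M *ᵥ v)) := by
        gcongr
        simpa only [norm_toEuclideanCLM_conjTranspose] using en_mulVec_le Xᴴ (M *ᵥ v)
    _ = N ^ 2 * en (M *ᵥ v) := by ring

lemma conjTranspose_mul_self_of_eq_mul_diagonal_mul {κ ι ι' : Type*} [Fintype κ] [Fintype ι]
    [DecidableEq ι] {U : Matrix κ ι ℂ} {A : Matrix κ ι' ℂ} {Y : Matrix ι ι' ℂ} {c : ι → ℝ}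
    (hU : Uᴴ * U = 1) (hA : A = U * diagonal (fun j => (c j : ℂ)) * Y) :
    Aᴴ * A = Yᴴ * diagonal (fun j => ((c j ^ 2 : ℝ) : ℂ)) * Y := by
  subst hA
  simp only [conjTranspose_mul, diagonal_conjTranspose, Matrix.mul_assoc]
  rw [← Matrix.mul_assoc Uᴴ, hU, Matrix.one_mul, ← Matrix.mul_assoc (diagonal _),
    diagonal_mul_diagonal]
  congr 3
  ext j
  simp [sq]

lemma smul_gram_sub_smul_gram_eq_congr_diagonal {κ κ' ι ι' : Type*} [Fintype κ] [Fintype κ']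
    [Fintype ι] [DecidableEq ι] {U : Matrix κ ι ℂ} {V : Matrix κ' ι ℂ} {A : Matrix κ ι' ℂ}
    {B : Matrix κ' ι' ℂ} {Y : Matrix ι ι' ℂ} (hU : Uᴴ * U = 1) (hV : Vᴴ * V = 1) {c s : ι → ℝ}
    (hA : A = U * diagonal (fun j => (c j : ℂ)) * Y)
    (hB : B = V * diagonal (fun j => (s j : ℂ)) * Y) (a b : ℝ) :
    (a : ℂ) • (Aᴴ * A) - (b : ℂ) • (Bᴴ * B)
      = Yᴴ * diagonal (fun j => ((a * c j ^ 2 - b * s j ^ 2 : ℝ) : ℂ)) * Y := by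
  have hdiag : diagonal (fun j => ((a * c j ^ 2 - b * s j ^ 2 : ℝ) : ℂ))
      = (a : ℂ) • diagonal (fun j => ((c j ^ 2 : ℝ) : ℂ))
        - (b : ℂ) • diagonal (fun j => ((s j ^ 2 : ℝ) : ℂ)) := by
    rw [← diagonal_smul, ← diagonal_smul, diagonal_sub]
    congr 1
    ext j
    simp only [Pi.smul_apply, smul_eq_mul]
    push_cast
    ring
  rw [conjTranspose_mul_self_of_eq_mul_diagonal_mul hU hA,
    conjTranspose_mul_self_of_eq_mul_diagonal_mul hV hB, hdiag, Matrix.mul_sub, Matrix.sub_mul,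
    Matrix.mul_smul, Matrix.mul_smul, Matrix.smul_mul, Matrix.smul_mul]

theorem stmt17_general {m p n : ℕ}
    (A : Matrix (Fin m) (Fin n) ℂ) (B : Matrix (Fin p) (Fin n) ℂ)
    (U : Matrix (Fin m) (Fin n) ℂ) (V : Matrix (Fin p) (Fin n) ℂ)
    (X : Matrix (Fin n) (Fin n) ℂ) (hX : IsUnit X.det)
    (hU : Uᴴ * U = 1) (hV : Vᴴ * V = 1)
    (c s : Fin n → ℝ)
    (hA : A = U * Matrix.diagonal (fun j => (c j : ℂ)) * X⁻¹)
    (hB : B = V * Matrix.diagonal (fun j => (s j : ℂ)) * X⁻¹)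
    (ct st : ℝ) (xt : Fin n → ℂ) (hxt : xt ≠ 0)
    (r : Fin n → ℂ)
    (hr : r = ((st ^ 2 : ℝ) : ℂ) • (Aᴴ * A).mulVec xt - ((ct ^ 2 : ℝ) : ℂ) • (Bᴴ * B).mulVec xt) :
    ∃ j, |st ^ 2 * c j ^ 2 - ct ^ 2 * s j ^ 2|
      ≤ ‖Matrix.toEuclideanCLM (𝕜 := ℂ) X‖ ^ 2 * (en r / en xt) := by
  obtain ⟨i, -⟩ := Function.ne_iff.mp hxt
  have : Nonempty (Fin n) := ⟨i⟩
  set d : Fin n → ℝ := fun j => st ^ 2 * c j ^ 2 - ct ^ 2 * s j ^ 2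
  obtain ⟨j, -, hj⟩ := Finset.exists_min_image Finset.univ (fun j => |d j|) Finset.univ_nonempty
  have hr' : r = (X⁻¹ᴴ * diagonal (fun j => (d j : ℂ)) * X⁻¹) *ᵥ xt := by
    rw [← smul_gram_sub_smul_gram_eq_congr_diagonal hU hV hA hB, hr, sub_mulVec, smul_mulVec,
      smul_mulVec]
  refine ⟨j, ?_⟩
  rw [mul_div_assoc', le_div_iff₀ (en_pos hxt), hr']
  refine mul_en_le_sq_norm_mul_en_congr_diagonal_mulVec hX (abs_nonneg _) (fun i => ?_) xt
  simpa only [Complex.norm_real, Real.norm_eq_abs] using hj i (Finset.mem_univ i)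

/-- Bauer–Fike for the GSVD. -/
theorem stmt17 {m p n : ℕ}
    (A : Matrix (Fin m) (Fin n) ℂ) (B : Matrix (Fin p) (Fin n) ℂ)
    (U : Matrix (Fin m) (Fin n) ℂ) (V : Matrix (Fin p) (Fin n) ℂ)
    (X : Matrix (Fin n) (Fin n) ℂ) (hX : IsUnit X.det)
    (hU : Uᴴ * U = 1) (hV : Vᴴ * V = 1)
    (c s : Fin n → ℝ) (hcs : ∀ j, c j ^ 2 + s j ^ 2 = 1)
    (hA : A = U * Matrix.diagonal (fun j => (c j : ℂ)) * X⁻¹)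
    (hB : B = V * Matrix.diagonal (fun j => (s j : ℂ)) * X⁻¹)
    (ct st : ℝ) (xt : Fin n → ℂ) (hxt : xt ≠ 0)
    (r : Fin n → ℂ)
    (hr : r = ((st ^ 2 : ℝ) : ℂ) • (Aᴴ * A).mulVec xt - ((ct ^ 2 : ℝ) : ℂ) • (Bᴴ * B).mulVec xt) :
    ∃ j, |st ^ 2 * c j ^ 2 - ct ^ 2 * s j ^ 2|
      ≤ ‖Matrix.toEuclideanCLM (𝕜 := ℂ) X‖ ^ 2 * (en r / en xt) :=
  stmt17_general A B U V X hX hU hV c s hA hB ct st xt hxt r hr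
end
end
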